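/- Let S be an invertible real p×p matrix with rows and columns indexed by P. Then S ∈ 𝒮_𝒢 if and only if S⁻¹ ∈ 𝒮_𝒢; that is, 𝒮_𝒢 is closed under matrix inversion. -/

import Mathlib

open Matrix Finset

abbrev PairIdx (d : ℕ) := {p : Fin d × Fin d // p.1 < p.2}

/-- Pairs `r` and `s` lie in the same block: the unordered pairs of cluster labels coincide. -/
def sameBlock {d K : ℕ} (g : Fin d → Fin K) (r s : PairIdx d) : Prop :=
  (g r.1.1 = g s.1.1 ∧ g r.1.2 = g s.1.2) ∨ (g r.1.1 = g s.1.2 ∧ g r.1.2 = g s.1.1)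

instance {d K : ℕ} (g : Fin d → Fin K) : DecidableRel (sameBlock g) :=
  fun r s => by unfold sameBlock; infer_instance

/-- The overlap type `φ̄(r,s)`: the multiset of cluster labels of the elements of
`{i_r, j_r} ∩ {i_s, j_s}`.  The empty multiset encodes the type `(0,0)`, the singleton
`{k}` encodes `(0,k)`, and the two-element multiset `{k₁,k₂}` encodes
`(min(k₁,k₂), max(k₁,k₂))`. -/
def overlap {d K : ℕ} (g : Fin d → Fin K) (r s : PairIdx d) : Multiset (Fin K) :=
  (({r.1.1, r.1.2} ∩ {s.1.1, s.1.2} : Finset (Fin d)).val.map g)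

/-- The cardinality of the block containing `r`. -/
def blockCard {d K : ℕ} (g : Fin d → Fin K) (r : PairIdx d) : ℕ :=
  (Finset.univ.filter (fun t => sameBlock g r t)).card

/-- The blockwise-averaging matrix `Γ`. -/
noncomputable def Gamma {d K : ℕ} (g : Fin d → Fin K) :
    Matrix (PairIdx d) (PairIdx d) ℝ :=
  Matrix.of fun r s => if sameBlock g r s then (1 : ℝ) / (blockCard g r) else 0

/-- Membership in the class `𝒮_𝒢`. -/
def inSG {d K : ℕ} (g : Fin d → Fin K) (S : Matrix (PairIdx d) (PairIdx d) ℝ) : Prop :=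
  S.IsSymm ∧ ∀ r r' s s' : PairIdx d, sameBlock g r r' → sameBlock g s s' →
    overlap g r s = overlap g r' s' → S r s = S r' s'

/-! A matrix lies in `𝒮_𝒢` exactly when it is symmetric and invariant under the action on pairs
of every cluster-preserving permutation of `{1, …, d}`. Indeed, if `(r, s)` and `(r', s')` have the
same blocks and the same overlap type, then `r ∩ s`, `r \ s`, `s \ r` carry the same multisets of
cluster labels as `r' ∩ s'`, `r' \ s'`, `s' \ r'`, so a cluster-preserving permutation matching
these parts piece by piece sends `r` to `r'` and `s` to `s'`. Symmetry and invariance under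
conjugation by a permutation matrix both pass to the inverse. -/

open Equiv

section PermTransport

variable {α β : Type*} [DecidableEq α] {g : α → β}

theorem apply_swap_of_apply_eq {a b : α} (h : g a = g b) (x : α) : g (swap a b x) = g x := by
  rcases eq_or_ne x a with rfl | hxa
  · rw [swap_apply_left, h]
  rcases eq_or_ne x b with rfl | hxb
  · rw [swap_apply_right, h]
  rw [swap_apply_of_ne_of_ne hxa hxb]

theorem Multiset.Rel.exists_perm_map_eq {R : α → α → Prop} (hR : ∀ a b, R a b → g a = g b)
    {m m' : Multiset α} (h : Multiset.Rel R m m') (hm : m.Nodup) (hm' : m'.Nodup) :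
    ∃ σ : Perm α, (∀ x, g (σ x) = g x) ∧ (∀ x ∈ m, R x (σ x)) ∧ m.map σ = m' := by
  induction h with
  | zero => exact ⟨1, fun _ => rfl, by simp, rfl⟩
  | @cons a b as bs hab _ ih =>
    rw [Multiset.nodup_cons] at hm hm'
    obtain ⟨σ, hσg, hσR, hσm⟩ := ih hm.2 hm'.2
    have hσa : σ a ∉ bs := by
      rw [← hσm, Multiset.mem_map]
      rintro ⟨x, hx, hxa⟩
      exact hm.1 (σ.injective hxa ▸ hx)
    have hfix : ∀ x ∈ as, swap (σ a) b (σ x) = σ x := fun x hx =>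
      have hσx : σ x ∈ bs := hσm ▸ Multiset.mem_map_of_mem σ hx
      swap_apply_of_ne_of_ne (ne_of_mem_of_not_mem hσx hσa) (ne_of_mem_of_not_mem hσx hm'.1)
    refine ⟨swap (σ a) b * σ, fun x => ?_, ?_, ?_⟩
    · rw [Perm.mul_apply, apply_swap_of_apply_eq ((hσg a).trans (hR a b hab)), hσg]
    · simp only [Multiset.mem_cons, forall_eq_or_imp, Perm.mul_apply, swap_apply_left]
      exact ⟨hab, fun x hx => by rw [hfix x hx]; exact hσR x hx⟩
    · rw [Multiset.map_cons, Perm.mul_apply, swap_apply_left, ← hσm]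
      congr 1
      exact Multiset.map_congr rfl hfix

theorem Finset.val_eq_inter_add_sdiff (A B : Finset α) :
    A.val = (A ∩ B).val + (A \ B).val := by
  rw [← Finset.filter_mem_eq_inter, ← Finset.filter_notMem_eq_sdiff]
  exact (Multiset.filter_add_not _ _).symm

theorem map_sdiff_val_eq_of_map_val_eq {A B A' B' : Finset α} (hA : A.val.map g = A'.val.map g)
    (hAB : (A ∩ B).val.map g = (A' ∩ B').val.map g) :
    (A \ B).val.map g = (A' \ B').val.map g := by
  rw [A.val_eq_inter_add_sdiff B, A'.val_eq_inter_add_sdiff B', Multiset.map_add,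
    Multiset.map_add, hAB] at hA
  exact add_left_cancel hA

theorem exists_perm_image_eq_image_eq {A B A' B' : Finset α}
    (hA : A.val.map g = A'.val.map g) (hB : B.val.map g = B'.val.map g)
    (hAB : (A ∩ B).val.map g = (A' ∩ B').val.map g) :
    ∃ σ : Perm α, (∀ x, g (σ x) = g x) ∧ A.image σ = A' ∧ B.image σ = B' := by
  let R : α → α → Prop := fun x y => g x = g y ∧ (x ∈ A ↔ y ∈ A') ∧ (x ∈ B ↔ y ∈ B')
  have hrel : ∀ X X' : Finset α, X.val.map g = X'.val.map g →
      (∀ x ∈ X, ∀ y ∈ X', (x ∈ A ↔ y ∈ A') ∧ (x ∈ B ↔ y ∈ B')) →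
      Multiset.Rel R X.val X'.val := fun X X' h hmem =>
    (Multiset.rel_map.mp (Multiset.rel_eq.mpr h)).mono fun x hx y hy hxy =>
      ⟨hxy, hmem x hx y hy⟩
  have hunion : ∀ A B : Finset α, (A ∪ B).val = (A ∩ B).val + (A \ B).val + (B \ A).val := by
    intro A B
    rw [(A ∪ B).val_eq_inter_add_sdiff A, Finset.union_inter_cancel_left,
      Finset.union_sdiff_left, ← A.val_eq_inter_add_sdiff B]
  have hBA : (B ∩ A).val.map g = (B' ∩ A').val.map g := by
    rwa [Finset.inter_comm, Finset.inter_comm B']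
  have hRel : Multiset.Rel R (A ∪ B).val (A' ∪ B').val := by
    rw [hunion, hunion]
    refine ((hrel _ _ hAB ?_).add (hrel _ _ (map_sdiff_val_eq_of_map_val_eq hA hAB) ?_)).add
      (hrel _ _ (map_sdiff_val_eq_of_map_val_eq hB hBA) ?_) <;> simp_all
  obtain ⟨σ, hσg, hσR, hσm⟩ :=
    hRel.exists_perm_map_eq (fun _ _ h => h.1) (A ∪ B).nodup (A' ∪ B').nodup
  have himage : ∀ X X' : Finset α, X ⊆ A ∪ B → X' ⊆ A' ∪ B' →
      (∀ x ∈ A ∪ B, x ∈ X ↔ σ x ∈ X') → X.image σ = X' := by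
    intro X X' hX hX' hσX
    ext y
    simp only [Finset.mem_image]
    refine ⟨fun ⟨x, hx, hxy⟩ => hxy ▸ (hσX x (hX hx)).mp hx, fun hy => ?_⟩
    obtain ⟨x, hx, rfl⟩ := Multiset.mem_map.mp (hσm ▸ (hX' hy) : y ∈ (A ∪ B).val.map σ)
    exact ⟨x, (hσX x hx).mpr hy, rfl⟩
  exact ⟨σ, hσg,
    himage A A' Finset.subset_union_left Finset.subset_union_left fun x hx => (hσR x hx).2.1,
    himage B B' Finset.subset_union_right Finset.subset_union_right fun x hx => (hσR x hx).2.2⟩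

end PermTransport

namespace PairIdx

variable {d K : ℕ}

def toFinset (r : PairIdx d) : Finset (Fin d) := {r.1.1, r.1.2}

theorem toFinset_injective : Function.Injective (toFinset (d := d)) := by
  rintro ⟨⟨a, b⟩, hab⟩ ⟨⟨c, e⟩, hce⟩ h
  simp only [toFinset, Finset.ext_iff, Finset.mem_insert, Finset.mem_singleton] at h
  have := h a; have := h b; have := h c; have := h e
  simp only [Subtype.mk.injEq, Prod.mk.injEq]
  grind

def permMap (σ : Perm (Fin d)) (r : PairIdx d) : PairIdx d :=
  if h : σ r.1.1 < σ r.1.2 then ⟨(σ r.1.1, σ r.1.2), h⟩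
  else ⟨(σ r.1.2, σ r.1.1),
    lt_of_le_of_ne (not_lt.mp h) fun he => r.2.ne (σ.injective he).symm⟩

theorem toFinset_permMap (σ : Perm (Fin d)) (r : PairIdx d) :
    (permMap σ r).toFinset = r.toFinset.image σ := by
  unfold permMap toFinset
  split_ifs <;> simp [Finset.image_insert, Finset.pair_comm]

def permEquiv (σ : Perm (Fin d)) : PairIdx d ≃ PairIdx d where
  toFun := permMap σ
  invFun := permMap σ.symm
  left_inv r := toFinset_injective <| by
    rw [toFinset_permMap, toFinset_permMap, Finset.image_image]; simp
  right_inv r := toFinset_injective <| by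
    rw [toFinset_permMap, toFinset_permMap, Finset.image_image]; simp

theorem map_toFinset_val_eq_of_sameBlock {g : Fin d → Fin K} {r r' : PairIdx d}
    (h : sameBlock g r r') : r.toFinset.val.map g = r'.toFinset.val.map g := by
  simp only [toFinset, Finset.insert_val_of_notMem (Finset.notMem_singleton.mpr r.2.ne),
    Finset.insert_val_of_notMem (Finset.notMem_singleton.mpr r'.2.ne)]
  rcases h with ⟨h₁, h₂⟩ | ⟨h₁, h₂⟩
  · simp [h₁, h₂]
  · simpa [h₁, h₂] using Multiset.pair_comm _ _

theorem sameBlock_permMap {g : Fin d → Fin K} {σ : Perm (Fin d)} (hσ : ∀ x, g (σ x) = g x)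
    (r : PairIdx d) : sameBlock g r (permMap σ r) := by
  unfold permMap sameBlock
  split_ifs <;> simp [hσ]

theorem overlap_permMap {g : Fin d → Fin K} {σ : Perm (Fin d)} (hσ : ∀ x, g (σ x) = g x)
    (r s : PairIdx d) : overlap g (permMap σ r) (permMap σ s) = overlap g r s := by
  change ((permMap σ r).toFinset ∩ (permMap σ s).toFinset).val.map g = _
  rw [toFinset_permMap, toFinset_permMap, ← Finset.image_inter _ _ σ.injective,
    Finset.image_val_of_injOn σ.injective.injOn, Multiset.map_map]
  exact Multiset.map_congr rfl fun x _ => hσ x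

theorem exists_perm_of_sameBlock_of_overlap_eq {g : Fin d → Fin K} {r r' s s' : PairIdx d}
    (hr : sameBlock g r r') (hs : sameBlock g s s') (hrs : overlap g r s = overlap g r' s') :
    ∃ σ : Perm (Fin d), (∀ x, g (σ x) = g x) ∧ permMap σ r = r' ∧ permMap σ s = s' := by
  obtain ⟨σ, hσg, hσr, hσs⟩ := exists_perm_image_eq_image_eq
    (map_toFinset_val_eq_of_sameBlock hr) (map_toFinset_val_eq_of_sameBlock hs) hrs
  exact ⟨σ, hσg, toFinset_injective (by rw [toFinset_permMap, hσr]),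
    toFinset_injective (by rw [toFinset_permMap, hσs])⟩

end PairIdx

open PairIdx

theorem inSG_iff_isSymm_and_submatrix_eq {d K : ℕ} (g : Fin d → Fin K)
    (S : Matrix (PairIdx d) (PairIdx d) ℝ) :
    inSG g S ↔ S.IsSymm ∧ ∀ σ : Perm (Fin d), (∀ x, g (σ x) = g x) →
      S.submatrix (permEquiv σ) (permEquiv σ) = S := by
  refine ⟨fun h => ⟨h.1, fun σ hσ => ?_⟩, fun h => ⟨h.1, fun r r' s s' hr hs hrs => ?_⟩⟩
  · ext r s
    exact (h.2 r _ s _ (sameBlock_permMap hσ r) (sameBlock_permMap hσ s)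
      (overlap_permMap hσ r s).symm).symm
  · obtain ⟨σ, hσ, rfl, rfl⟩ := exists_perm_of_sameBlock_of_overlap_eq hr hs hrs
    exact (congrFun₂ (h.2 σ hσ) r s).symm

theorem inSG.inv {d K : ℕ} {g : Fin d → Fin K} {S : Matrix (PairIdx d) (PairIdx d) ℝ}
    (hS : inSG g S) : inSG g S⁻¹ := by
  rw [inSG_iff_isSymm_and_submatrix_eq] at hS ⊢
  exact ⟨hS.1.inv, fun σ hσ => by rw [← inv_submatrix_equiv, hS.2 σ hσ]⟩

theorem statement_15_general {d K : ℕ}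
    (g : Fin d → Fin K)
    (S : Matrix (PairIdx d) (PairIdx d) ℝ) (hS : IsUnit S.det) :
    inSG g S ↔ inSG g S⁻¹ :=
  ⟨inSG.inv, fun h => by simpa only [nonsing_inv_nonsing_inv S hS] using h.inv⟩

/-- `𝒮_𝒢` is closed under matrix inversion: for an invertible matrix `S`,
`S ∈ 𝒮_𝒢` if and only if `S⁻¹ ∈ 𝒮_𝒢`. -/
theorem statement_15 {d K : ℕ} (hd : 2 ≤ d) (hK : 1 ≤ K)
    (g : Fin d → Fin K) (hg : Function.Surjective g)
    (S : Matrix (PairIdx d) (PairIdx d) ℝ) (hS : IsUnit S.det) :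
    inSG g S ↔ inSG g S⁻¹ :=
  statement_15_general g S hS
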